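/- Let g, ĝ ∈ [r]^p be label vectors and suppose every cluster of g has size at least αp/r with α > 0. If the misclustering error h(ĝ, g) < α/(2r) · 1, i.e., the fraction of mismatches under the optimal permutation is less than α/(2r), then the optimal permutation π achieving the minimum is unique. -/
import Mathlib


open Finset

/-- The fraction of mismatches of `ĝ` against `π ∘ g`. -/
noncomputable def permCost {p r : ℕ} (ghat g : Fin p → Fin r) (π : Equiv.Perm (Fin r)) : ℝ :=
  (1 / (p : ℝ)) * ∑ j, if ghat j ≠ π (g j) then (1 : ℝ) else 0

/-- The misclustering error: minimum of `permCost` over permutations. -/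
noncomputable def misclusterErr {p r : ℕ} (ghat g : Fin p → Fin r) : ℝ :=
  ⨅ π : Equiv.Perm (Fin r), permCost ghat g π

/-- If every cluster of `g` has size at least `αp/r` with `α > 0` and the
misclustering error `h(ĝ, g)` is less than `α/(2r)`, then the permutation achieving the
minimum in the definition of `h` is unique. -/
theorem optimal_permutation_unique {p r : ℕ} (hp : 0 < p) (hr : 0 < r)
    (g ghat : Fin p → Fin r) (α : ℝ) (hα : 0 < α)
    (hsize : ∀ a : Fin r, α * p / r ≤ ((Finset.univ.filter fun j => g j = a).card : ℝ))
    (hsmall : misclusterErr ghat g < α / (2 * r)) :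
    ∀ π₁ π₂ : Equiv.Perm (Fin r),
      permCost ghat g π₁ = misclusterErr ghat g →
      permCost ghat g π₂ = misclusterErr ghat g →
      π₁ = π₂ := by
  intro π₁ π₂ h1 h2
  by_contra hne
  obtain ⟨a, ha⟩ : ∃ a, π₁ a ≠ π₂ a := by
    by_contra h; push_neg at h; exact hne (Equiv.ext h)
  set S := Finset.univ.filter fun j => g j = a with hS
  have key : ∀ j ∈ S, (1 : ℝ) ≤
      (if ghat j ≠ π₁ (g j) then (1 : ℝ) else 0) +
      (if ghat j ≠ π₂ (g j) then (1 : ℝ) else 0) := by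
    intro j hj
    rw [hS, mem_filter] at hj
    rw [hj.2]
    by_cases hb1 : ghat j = π₁ a
    · have hb2 : ghat j ≠ π₂ a := fun h => ha (hb1.symm.trans h)
      simp [hb1, hb2, ha]
    · simp only [hb1, ne_eq, not_false_eq_true, if_true]
      have : (0:ℝ) ≤ if ghat j ≠ π₂ a then (1:ℝ) else 0 := by positivity
      linarith
  have hp' : (0 : ℝ) < p := by exact_mod_cast hp
  have hr' : (0 : ℝ) < r := by exact_mod_cast hr
  have hsum : (S.card : ℝ) ≤
      (∑ j, if ghat j ≠ π₁ (g j) then (1 : ℝ) else 0) +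
      (∑ j, if ghat j ≠ π₂ (g j) then (1 : ℝ) else 0) := by
    rw [← Finset.sum_add_distrib]
    calc (S.card : ℝ) = ∑ _j ∈ S, (1 : ℝ) := by simp
    _ ≤ ∑ j ∈ S, ((if ghat j ≠ π₁ (g j) then (1 : ℝ) else 0) +
        (if ghat j ≠ π₂ (g j) then (1 : ℝ) else 0)) := Finset.sum_le_sum key
    _ ≤ ∑ j, ((if ghat j ≠ π₁ (g j) then (1 : ℝ) else 0) +
        (if ghat j ≠ π₂ (g j) then (1 : ℝ) else 0)) := by
        apply Finset.sum_le_sum_of_subset_of_nonneg (Finset.subset_univ S)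
        intro i _ _; positivity
  have hlow : α / r ≤ permCost ghat g π₁ + permCost ghat g π₂ := by
    unfold permCost
    rw [← mul_add]
    calc α / r = (1 / (p : ℝ)) * (α * p / r) := by field_simp
    _ ≤ (1 / (p : ℝ)) * (S.card : ℝ) := by
        apply mul_le_mul_of_nonneg_left (hsize a) (by positivity)
    _ ≤ _ := mul_le_mul_of_nonneg_left hsum (by positivity)
  rw [h1, h2] at hlow
  have : α / (2 * r) ≥ α / (2 * r) := le_refl _
  have h2r : α / (2 * r) + α / (2 * r) = α / r := by field_simp; ring
  linarith
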